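/- Let P be a chain and C a (P,π,w)-code with d_{w,(P,π)}(C) = m_w + (d_H(C)−1)·M_w. Then C is MDS (attains the Singleton bound K = q^{n−(k_1+⋯+k_λ)} with λ = ⌊(d_w(C)−m_w)/M_w⌋) if and only if C is perfect (ρ(C)-perfect, where ρ(C) is the packing radius). -/
import Mathlib


attribute [local instance] Classical.propDecidable

noncomputable section

variable {ι F : Type*}

section Defs
variable [Fintype ι] [PartialOrder ι] [Field F] [Fintype F] {k : ι → ℕ}

/-- block support -/
def suppB (u : ∀ i, Fin (k i) → F) : Finset ι :=
  Finset.univ.filter fun i => u i ≠ 0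

/-- order ideal generated by the block support -/
def idealOf (u : ∀ i, Fin (k i) → F) : Finset ι :=
  Finset.univ.filter fun i => ∃ j ∈ suppB u, i ≤ j

/-- maximal elements of the ideal generated by the support -/
def maxOf (u : ∀ i, Fin (k i) → F) : Finset ι :=
  (idealOf u).filter fun i => ∀ j ∈ idealOf u, i ≤ j → i = j

/-- maximal weight of a block -/
def Wblk (w : F → ℕ) (u : ∀ i, Fin (k i) → F) (i : ι) : ℕ :=
  Finset.univ.sup fun j => w (u i j)

/-- maximal value of the weight -/
def Mw (w : F → ℕ) : ℕ := Finset.univ.sup w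

/-- minimal value of the weight on nonzero elements -/
def mw (w : F → ℕ) : ℕ := sInf (w '' {a | a ≠ 0})

/-- the weighted poset block weight -/
def omegaW (w : F → ℕ) (u : ∀ i, Fin (k i) → F) : ℕ :=
  (∑ i ∈ maxOf u, Wblk w u i) + (idealOf u \ maxOf u).card * Mw w

/-- principal ideal generated by `i` -/
def pIdeal (i : ι) : Finset ι := Finset.univ.filter fun j => j ≤ i

end Defs


section Aux
variable [Field F] [Fintype F] {s : ℕ} {k : Fin s → ℕ} {w : F → ℕ}

lemma mem_suppB {u : ∀ j : Fin s, Fin (k j) → F} {i : Fin s} :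
    i ∈ suppB u ↔ u i ≠ 0 := by simp [suppB]

lemma suppB_nonempty {u : ∀ j : Fin s, Fin (k j) → F} (hu : u ≠ 0) :
    (suppB u).Nonempty := by
  obtain ⟨i, hi⟩ := Function.ne_iff.mp hu
  exact ⟨i, mem_suppB.mpr hi⟩

lemma mem_idealOf {u : ∀ j : Fin s, Fin (k j) → F} {i : Fin s} :
    i ∈ idealOf u ↔ ∃ j ∈ suppB u, i ≤ j := by simp [idealOf]

lemma idealOf_eq {u : ∀ j : Fin s, Fin (k j) → F} (h : (suppB u).Nonempty) :
    idealOf u = Finset.univ.filter (fun i => i ≤ (suppB u).max' h) := by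
  ext i
  simp only [mem_idealOf, Finset.mem_filter, Finset.mem_univ, true_and]
  constructor
  · rintro ⟨j, hj, hij⟩; exact hij.trans (Finset.le_max' _ _ hj)
  · intro hi; exact ⟨_, (suppB u).max'_mem h, hi⟩

lemma card_filter_le (t : Fin s) :
    (Finset.univ.filter (fun i => i ≤ t)).card = (t : ℕ) + 1 := by
  rw [show Finset.univ.filter (fun i => i ≤ t) = Finset.Iic t by ext; simp, Fin.card_Iic]

lemma card_idealOf {u : ∀ j : Fin s, Fin (k j) → F} (h : (suppB u).Nonempty) :
    (idealOf u).card = ((suppB u).max' h : ℕ) + 1 := by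
  rw [idealOf_eq h, card_filter_le]

lemma maxOf_eq {u : ∀ j : Fin s, Fin (k j) → F} (h : (suppB u).Nonempty) :
    maxOf u = {(suppB u).max' h} := by
  set t := (suppB u).max' h with ht
  have htI : t ∈ idealOf u := mem_idealOf.mpr ⟨t, (suppB u).max'_mem h, le_rfl⟩
  ext i
  simp only [maxOf, Finset.mem_filter, Finset.mem_singleton]
  constructor
  · rintro ⟨hiI, hmax⟩
    have hit : i ≤ t := by
      rw [idealOf_eq h] at hiI
      simpa using hiI
    exact hmax t htI hit
  · rintro rfl
    refine ⟨htI, fun j hj hij => ?_⟩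
    rw [idealOf_eq h] at hj
    exact le_antisymm hij (by simpa using hj)

lemma card_sdiff' {α : Type*} (inst : DecidableEq α) {s t : Finset α} (h : s ⊆ t) :
    (@SDiff.sdiff _ (@Finset.instSDiff α inst) t s).card = t.card - s.card := by
  rw [Subsingleton.elim inst (Classical.decEq α)]
  exact @Finset.card_sdiff_of_subset α s t (Classical.decEq α) h

lemma omegaW_zero : omegaW w (0 : ∀ j : Fin s, Fin (k j) → F) = 0 := by
  have hs : suppB (0 : ∀ j : Fin s, Fin (k j) → F) = ∅ := by
    ext i; simp [mem_suppB]
  have hI : idealOf (0 : ∀ j : Fin s, Fin (k j) → F) = ∅ := by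
    ext i; simp [mem_idealOf, hs]
  have hM : maxOf (0 : ∀ j : Fin s, Fin (k j) → F) = ∅ := by
    rw [maxOf, hI]; simp
  simp [omegaW, hI, hM]

lemma omegaW_eq {u : ∀ j : Fin s, Fin (k j) → F} (h : (suppB u).Nonempty) :
    omegaW w u = Wblk w u ((suppB u).max' h) + ((suppB u).max' h : ℕ) * Mw w := by
  set t := (suppB u).max' h with ht
  have h1 : maxOf u = {t} := maxOf_eq h
  have htI : t ∈ idealOf u := mem_idealOf.mpr ⟨t, (suppB u).max'_mem h, le_rfl⟩
  have hsub : {t} ⊆ idealOf u := by simpa using htI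
  rw [omegaW, h1, Finset.sum_singleton, card_sdiff' _ hsub, card_idealOf h,
    Finset.card_singleton, ← ht]
  simp

lemma Wblk_le_Mw (u : ∀ j : Fin s, Fin (k j) → F) (i : Fin s) :
    Wblk w u i ≤ Mw w :=
  Finset.sup_le fun j _ => Finset.le_sup (f := w) (Finset.mem_univ _)

lemma mw_le_w {a : F} (ha : a ≠ 0) : mw w ≤ w a :=
  Nat.sInf_le ⟨a, ha, rfl⟩

lemma mw_le_Wblk {u : ∀ j : Fin s, Fin (k j) → F} {i : Fin s} (hi : u i ≠ 0) :
    mw w ≤ Wblk w u i := by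
  obtain ⟨j, hj⟩ := Function.ne_iff.mp hi
  refine le_trans (mw_le_w hj) ?_
  exact Finset.le_sup (f := fun j => w (u i j)) (Finset.mem_univ j)

lemma one_le_mw (hw0 : ∀ a : F, w a = 0 ↔ a = 0) : 1 ≤ mw w := by
  have hne : (w '' {a | a ≠ 0}).Nonempty := ⟨w 1, 1, one_ne_zero, rfl⟩
  obtain ⟨a, ha, hwa⟩ := Nat.sInf_mem hne
  rw [mw, ← hwa]
  exact Nat.one_le_iff_ne_zero.mpr (fun h => ha ((hw0 a).mp h))

lemma mw_le_Mw : mw w ≤ Mw w := by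
  have hne : (w '' {a | a ≠ 0}).Nonempty := ⟨w 1, 1, one_ne_zero, rfl⟩
  obtain ⟨a, _, hwa⟩ := Nat.sInf_mem hne
  rw [mw, ← hwa]
  exact Finset.le_sup (Finset.mem_univ a)

/-- ball characterization -/
lemma omegaW_le_iff (hw0 : ∀ a : F, w a = 0 ↔ a = 0) (D : ℕ)
    (u : ∀ j : Fin s, Fin (k j) → F) :
    omegaW w u ≤ D * Mw w + (mw w - 1) ↔ ∀ j : Fin s, D ≤ (j : ℕ) → u j = 0 := by
  constructor
  · intro hle
    by_contra hcon
    push_neg at hcon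
    obtain ⟨j, hDj, hj⟩ := hcon
    have h : (suppB u).Nonempty := ⟨j, mem_suppB.mpr hj⟩
    set t := (suppB u).max' h with ht
    have hjt : j ≤ t := Finset.le_max' _ _ (mem_suppB.mpr hj)
    have htD : D ≤ (t : ℕ) := le_trans hDj hjt
    have hut : u t ≠ 0 := mem_suppB.mp ((suppB u).max'_mem h)
    have hlow : D * Mw w + mw w ≤ omegaW w u := by
      rw [omegaW_eq h, ← ht]
      have h1 : mw w ≤ Wblk w u t := mw_le_Wblk hut
      have h2 : D * Mw w ≤ (t : ℕ) * Mw w := Nat.mul_le_mul_right _ htD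
      omega
    have h1 : 1 ≤ mw w := one_le_mw hw0
    omega
  · intro hz
    by_cases hu : u = 0
    · subst hu; simp [omegaW_zero]
    · have h : (suppB u).Nonempty := suppB_nonempty hu
      set t := (suppB u).max' h with ht
      have hut : u t ≠ 0 := mem_suppB.mp ((suppB u).max'_mem h)
      have htD : (t : ℕ) < D := by
        by_contra hc
        exact hut (hz t (by omega))
      rw [omegaW_eq h, ← ht]
      have h1 : Wblk w u t ≤ Mw w := Wblk_le_Mw u t
      have h2 : ((t : ℕ) + 1) * Mw w ≤ D * Mw w := Nat.mul_le_mul_right _ (by omega)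
      rw [add_one_mul] at h2
      omega

end Aux

section Aux2
variable [Field F] [Fintype F] {s : ℕ} {k : Fin s → ℕ} {w : F → ℕ}

/-- projection onto blocks with index `≥ D` -/
def Rproj (D : ℕ) (x : ∀ j : Fin s, Fin (k j) → F) : ∀ j : Fin s, Fin (k j) → F :=
  fun j => if D ≤ (j : ℕ) then x j else 0

lemma Rproj_eq_iff (D : ℕ) (x y : ∀ j : Fin s, Fin (k j) → F) :
    Rproj D x = Rproj D y ↔ ∀ j : Fin s, D ≤ (j : ℕ) → x j = y j := by
  constructor
  · intro h j hj
    have := congrFun h j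
    simpa [Rproj, hj] using this
  · intro h
    funext j
    by_cases hj : D ≤ (j : ℕ)
    · simp [Rproj, hj, h j hj]
    · simp [Rproj, hj]

lemma Rproj_self {D : ℕ} {x : ∀ j : Fin s, Fin (k j) → F}
    (hx : ∀ j : Fin s, (j : ℕ) < D → x j = 0) : Rproj D x = x := by
  funext j
  by_cases hj : D ≤ (j : ℕ)
  · simp [Rproj, hj]
  · simp [Rproj, hj, hx j (by omega)]

lemma Rproj_vanish (D : ℕ) (x : ∀ j : Fin s, Fin (k j) → F) (j : Fin s)
    (hj : (j : ℕ) < D) : Rproj D x j = 0 := by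
  simp [Rproj, Nat.not_le.mpr hj]

/-- equivalence with functions on blocks `≥ D` -/
def vanishEquiv (D : ℕ) :
    {x : ∀ j : Fin s, Fin (k j) → F // ∀ j : Fin s, (j : ℕ) < D → x j = 0} ≃
      (∀ j : {j : Fin s // ¬ (j : ℕ) < D}, Fin (k j.1) → F) where
  toFun x j := x.1 j.1
  invFun y := ⟨fun j => if h : (j : ℕ) < D then 0 else y ⟨j, h⟩, fun j hj => by simp [hj]⟩
  left_inv x := by
    apply Subtype.ext
    funext j
    show (if h : (j : ℕ) < D then 0 else x.1 j) = x.1 j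
    by_cases h : (j : ℕ) < D
    · rw [dif_pos h, x.2 j h]
    · rw [dif_neg h]
  right_inv y := by
    funext j
    show (if h : (j.1 : ℕ) < D then (0 : Fin (k j.1) → F) else y ⟨j.1, h⟩) = y j
    rw [dif_neg j.2]

lemma card_vanish (D : ℕ) :
    Fintype.card {x : ∀ j : Fin s, Fin (k j) → F // ∀ j : Fin s, (j : ℕ) < D → x j = 0}
      = Fintype.card F ^ (∑ j ∈ Finset.univ.filter (fun j : Fin s => ¬ (j : ℕ) < D), k j) := by
  calc Fintype.card {x : ∀ j : Fin s, Fin (k j) → F // ∀ j : Fin s, (j : ℕ) < D → x j = 0}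
      = ∏ j : {j : Fin s // ¬ (j : ℕ) < D}, Fintype.card F ^ k j.1 := by
        rw [Fintype.card_congr (vanishEquiv D), Fintype.card_pi]
        refine Finset.prod_congr rfl fun j _ => ?_
        simp [Fintype.card_fun]
    _ = ∏ j ∈ Finset.univ.filter (fun j : Fin s => ¬ (j : ℕ) < D), Fintype.card F ^ k j :=
        (Finset.prod_subtype (p := fun j : Fin s => ¬ (j : ℕ) < D)
          (Finset.univ.filter (fun j : Fin s => ¬ (j : ℕ) < D)) (fun x => by simp)
          (fun j => Fintype.card F ^ k j)).symm
    _ = _ := Finset.prod_pow_eq_pow_sum _ _ _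

end Aux2


/-- For a chain and a code with `d_w(C) = m_w + (d_H(C)−1)·M_w`:
`C` is MDS iff `C` is perfect. -/
theorem stmt19 [Field F] [Fintype F]
    (s : ℕ) (k : Fin s → ℕ) (hk : ∀ i, 0 < k i)
    (w : F → ℕ)
    (hw0 : ∀ a : F, w a = 0 ↔ a = 0)
    (hwneg : ∀ a : F, w (-a) = w a)
    (hwadd : ∀ a b : F, w (a + b) ≤ w a + w b)
    (C : Finset (∀ j : Fin s, Fin (k j) → F)) (dH dw ρ : ℕ)
    (hdH : IsLeast {n | ∃ u ∈ C, ∃ v ∈ C, u ≠ v ∧ n = (idealOf (u - v)).card} dH)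
    (hdw : IsLeast {n | ∃ u ∈ C, ∃ v ∈ C, u ≠ v ∧ n = omegaW w (u - v)} dw)
    (hrel : dw = mw w + (dH - 1) * Mw w)
    (hρ : IsGreatest {r | ∀ c ∈ C, ∀ c' ∈ C, c ≠ c' →
      ∀ x, ¬(omegaW w (c - x) ≤ r ∧ omegaW w (c' - x) ≤ r)} ρ) :
    (C.card = Fintype.card F ^
        ((∑ j, k j) -
          ∑ j ∈ Finset.univ.filter (fun j : Fin s => (j : ℕ) < (dw - mw w) / Mw w), k j)) ↔
      (∀ v : ∀ j : Fin s, Fin (k j) → F,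
        ∃! c, c ∈ C ∧ omegaW w (v - c) ≤ ρ) := by
  
  have hq : 1 ≤ mw w := one_le_mw hw0
  have hMw : 1 ≤ Mw w := le_trans hq mw_le_Mw
  -- dH ≥ 1
  obtain ⟨u0, hu0, v0, hv0, huv0, hdHeq⟩ := hdH.1
  have hu0v0 : u0 - v0 ≠ 0 := sub_ne_zero.mpr huv0
  have hdH1 : 1 ≤ dH := by
    rw [hdHeq, card_idealOf (suppB_nonempty hu0v0)]
    omega
  set D := dH - 1 with hD
  -- the division computes to D
  have hdiv : (dw - mw w) / Mw w = D := by
    have h1 : dw - mw w = D * Mw w := by omega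
    rw [h1, Nat.mul_div_cancel _ (by omega)]
  set r0 := D * Mw w + (mw w - 1) with hr0
  -- packing at radius r0
  have packing0 : ∀ c ∈ C, ∀ c' ∈ C, c ≠ c' →
      ∀ x, ¬(omegaW w (c - x) ≤ r0 ∧ omegaW w (c' - x) ≤ r0) := by
    rintro c hc c' hc' hne x ⟨h1, h2⟩
    rw [omegaW_le_iff hw0] at h1 h2
    have hvan : ∀ j : Fin s, D ≤ (j : ℕ) → (c - c') j = 0 := by
      intro j hj
      have e : (c - c') j = (c - x) j - (c' - x) j := by
        simp only [Pi.sub_apply]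
        exact (sub_sub_sub_cancel_right _ _ _).symm
      rw [e, h1 j hj, h2 j hj, sub_zero]
    have hcc' : c - c' ≠ 0 := sub_ne_zero.mpr hne
    have hge : dH ≤ (idealOf (c - c')).card := hdH.2 ⟨c, hc, c', hc', hne, rfl⟩
    have h := suppB_nonempty hcc'
    have ht := card_idealOf h
    have htD : ((suppB (c - c')).max' h : ℕ) < D := by
      by_contra hcon
      exact mem_suppB.mp ((suppB (c - c')).max'_mem h)
        (hvan _ (le_of_not_gt hcon))
    omega
  -- ρ < dw
  obtain ⟨u1, hu1, v1, hv1, hne1, hdweq⟩ := hdw.1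
  have hρdw : ρ < dw := by
    by_contra hcon
    push_neg at hcon
    refine hρ.1 u1 hu1 v1 hv1 hne1 v1 ⟨?_, ?_⟩
    · rw [← hdweq]; exact hcon
    · rw [sub_self, omegaW_zero]; exact Nat.zero_le _
  have hρeq : ρ = r0 := le_antisymm (by omega) (hρ.2 packing0)
  -- characterization via Rproj
  have keyiff : ∀ x y : ∀ j : Fin s, Fin (k j) → F,
      omegaW w (x - y) ≤ ρ ↔ Rproj D x = Rproj D y := by
    intro x y
    rw [hρeq, hr0, omegaW_le_iff hw0, Rproj_eq_iff]
    constructor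
    · intro h j hj
      have := h j hj
      rwa [Pi.sub_apply, sub_eq_zero] at this
    · intro h j hj
      rw [Pi.sub_apply, sub_eq_zero]
      exact h j hj
  -- uniqueness
  have uniq : ∀ v : ∀ j : Fin s, Fin (k j) → F, ∀ c ∈ C, ∀ c' ∈ C,
      Rproj D c = Rproj D v → Rproj D c' = Rproj D v → c = c' := by
    intro v c hc c' hc' h1 h2
    by_contra hne
    refine packing0 c hc c' hc' hne v ⟨?_, ?_⟩
    · rw [← hρeq]; exact (keyiff c v).mpr h1
    · rw [← hρeq]; exact (keyiff c' v).mpr h2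
  -- image of everything
  set S0 : Finset (∀ j : Fin s, Fin (k j) → F) :=
    Finset.univ.filter (fun x => ∀ j : Fin s, (j : ℕ) < D → x j = 0) with hS0
  have himg : Finset.image (Rproj D) Finset.univ = S0 := by
    ext x
    simp only [Finset.mem_image, hS0, Finset.mem_filter, Finset.mem_univ, true_and]
    constructor
    · rintro ⟨y, -, rfl⟩
      exact fun j hj => Rproj_vanish D y j hj
    · intro hx
      first
      | exact ⟨x, Finset.mem_univ x, Rproj_self hx⟩
      | exact ⟨x, Rproj_self hx⟩
  have hinjC : Set.InjOn (Rproj D) (C : Set (∀ j : Fin s, Fin (k j) → F)) := by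
    intro c hc c' hc' h
    exact uniq c' c (Finset.mem_coe.mp hc) c' (Finset.mem_coe.mp hc') h rfl
  have hcardim : (C.image (Rproj D)).card = C.card := Finset.card_image_of_injOn hinjC
  have hsubim : C.image (Rproj D) ⊆ S0 := by
    rw [← himg]
    exact Finset.image_subset_image (Finset.subset_univ C)
  have hScard : S0.card = Fintype.card F ^
      ((∑ j, k j) -
        ∑ j ∈ Finset.univ.filter (fun j : Fin s => (j : ℕ) < D), k j) := by
    have h1 : S0.card = Fintype.card
        {x : ∀ j : Fin s, Fin (k j) → F // ∀ j : Fin s, (j : ℕ) < D → x j = 0} :=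
      (Fintype.card_subtype _).symm
    rw [h1, card_vanish]
    have h2 := Finset.sum_filter_add_sum_filter_not Finset.univ
      (fun j : Fin s => (j : ℕ) < D) k
    have h3 : (∑ j ∈ Finset.univ.filter (fun j : Fin s => ¬ (j : ℕ) < D), k j)
        = (∑ j, k j) - ∑ j ∈ Finset.univ.filter (fun j : Fin s => (j : ℕ) < D), k j := by
      rw [← h2, Nat.add_sub_cancel_left]
    rw [h3]
  rw [hdiv]
  constructor
  · intro hcard v
    have h3 : C.image (Rproj D) = S0 := by
      apply Finset.eq_of_subset_of_card_le hsubim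
      rw [hcardim, hcard, hScard]
    have h4 : Rproj D v ∈ C.image (Rproj D) := by
      rw [h3, ← himg]
      exact Finset.mem_image_of_mem _ (Finset.mem_univ v)
    obtain ⟨c, hcC, hRc⟩ := Finset.mem_image.mp h4
    refine ⟨c, ⟨hcC, (keyiff v c).mpr hRc.symm⟩, ?_⟩
    rintro c' ⟨hc'C, hc'le⟩
    exact uniq v c' hc'C c hcC ((keyiff v c').mp hc'le).symm hRc
  · intro hperf
    have h3 : C.image (Rproj D) = S0 := by
      refine Finset.Subset.antisymm hsubim ?_
      intro x hx
      obtain ⟨c, ⟨hcC, hle⟩, -⟩ := hperf x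
      have h5 : Rproj D x = Rproj D c := (keyiff x c).mp hle
      have hxx : Rproj D x = x := by
        refine Rproj_self ?_
        rw [hS0] at hx
        simpa using hx
      exact Finset.mem_image.mpr ⟨c, hcC, by rw [← h5, hxx]⟩
    rw [← hcardim, h3, hScard]
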